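/- Let d, m ∈ ℕ₊. Let ℳ : C([−1,1]^d) → C([−1,1]^d) satisfy Assumption 1 and Assumption 2, and let V : C([−1,1]^d) → Π_m be a linear operator such that ‖ h − V h ‖_{L∞} ≤ (5d/4) · ω_h(2/m; [−1,1]^d) for every h ∈ C([−1,1]^d). Then for every f ∈ C([−1,1]^d), ‖ ℳ(f) − V(ℳ(V(f))) ‖_{L∞} ≤ 6 L_ℳ d² · ω_f(2/m; [−1,1]^d) + 5 L_𝒴 d / (2m). -/
import Mathlib


open scoped BigOperators

/-- The cube `[-1,1]^d` in `ℝ^d`. -/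
def cube (d : ℕ) : Set (Fin d → ℝ) := {x | ∀ i, |x i| ≤ 1}

/-- The Euclidean distance on `ℝ^d`. -/
noncomputable def eucDist {d : ℕ} (x y : Fin d → ℝ) : ℝ :=
  Real.sqrt (∑ i, (x i - y i) ^ 2)

/-- The sup (`L∞`) norm of `f` over the cube `[-1,1]^d`. -/
noncomputable def supNorm (d : ℕ) (f : (Fin d → ℝ) → ℝ) : ℝ :=
  sSup {y | ∃ x ∈ cube d, y = |f x|}

/-- Modulus of continuity of `f` on a set `s ⊆ ℝ^d` (Euclidean distance). -/
noncomputable def modContOn {d : ℕ} (s : Set (Fin d → ℝ)) (f : (Fin d → ℝ) → ℝ)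
    (r : ℝ) : ℝ :=
  sSup {y | ∃ x₁ ∈ s, ∃ x₂ ∈ s, eucDist x₁ x₂ ≤ r ∧ y = |f x₁ - f x₂|}

/-- Modulus of continuity of `f` on the cube `[-1,1]^d`. -/
noncomputable def modCont (d : ℕ) (f : (Fin d → ℝ) → ℝ) (r : ℝ) : ℝ :=
  modContOn (cube d) f r

/-- `f : ℝ^d → ℝ` is (the evaluation of) a polynomial in `d` variables of
coordinatewise degree at most `m`, i.e. `f ∈ Π_m`. -/
def IsPolyDeg (d m : ℕ) (f : (Fin d → ℝ) → ℝ) : Prop :=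
  ∃ p : MvPolynomial (Fin d) ℝ,
    (∀ i, MvPolynomial.degreeOf i p ≤ m) ∧ ∀ x, f x = MvPolynomial.eval x p

lemma cube_eq (d : ℕ) : cube d = Set.pi Set.univ (fun _ : Fin d => Set.Icc (-1:ℝ) 1) := by
  ext x
  simp only [cube, Set.mem_setOf_eq, Set.mem_pi, Set.mem_univ, Set.mem_Icc,
    forall_true_left, abs_le]

lemma cube_compact (d : ℕ) : IsCompact (cube d) := by
  rw [cube_eq]; exact isCompact_univ_pi (fun _ => isCompact_Icc)

lemma zero_mem_cube (d : ℕ) : (0 : Fin d → ℝ) ∈ cube d := by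
  intro i; simp

lemma supSet_eq (d : ℕ) (f : (Fin d → ℝ) → ℝ) :
    {y | ∃ x ∈ cube d, y = |f x|} = (fun x => |f x|) '' cube d := by
  ext y; constructor
  · rintro ⟨x, hx, rfl⟩; exact ⟨x, hx, rfl⟩
  · rintro ⟨x, hx, rfl⟩; exact ⟨x, hx, rfl⟩

lemma supNorm_bdd {d : ℕ} {f : (Fin d → ℝ) → ℝ} (hf : ContinuousOn f (cube d)) :
    BddAbove {y | ∃ x ∈ cube d, y = |f x|} := by
  rw [supSet_eq]
  exact ((cube_compact d).image_of_continuousOn hf.abs).bddAbove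

lemma le_supNorm {d : ℕ} {f : (Fin d → ℝ) → ℝ} (hf : ContinuousOn f (cube d))
    {x : Fin d → ℝ} (hx : x ∈ cube d) : |f x| ≤ supNorm d f :=
  le_csSup (supNorm_bdd hf) ⟨x, hx, rfl⟩

lemma supNorm_le {d : ℕ} {f : (Fin d → ℝ) → ℝ} {C : ℝ} (hC : 0 ≤ C)
    (h : ∀ x ∈ cube d, |f x| ≤ C) : supNorm d f ≤ C := by
  apply Real.sSup_le _ hC
  rintro y ⟨x, hx, rfl⟩; exact h x hx

lemma eucDist_self {d : ℕ} (x : Fin d → ℝ) : eucDist x x = 0 := by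
  simp [eucDist]

lemma eucDist_nonneg {d : ℕ} (x y : Fin d → ℝ) : 0 ≤ eucDist x y :=
  Real.sqrt_nonneg _

lemma modCont_bdd {d : ℕ} {f : (Fin d → ℝ) → ℝ} (hf : ContinuousOn f (cube d)) (r : ℝ) :
    BddAbove {y | ∃ x₁ ∈ cube d, ∃ x₂ ∈ cube d, eucDist x₁ x₂ ≤ r ∧ y = |f x₁ - f x₂|} := by
  refine ⟨2 * supNorm d f, ?_⟩
  rintro y ⟨x₁, hx₁, x₂, hx₂, _, rfl⟩
  calc |f x₁ - f x₂| ≤ |f x₁| + |f x₂| := abs_sub _ _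
    _ ≤ supNorm d f + supNorm d f := add_le_add (le_supNorm hf hx₁) (le_supNorm hf hx₂)
    _ = 2 * supNorm d f := by ring

lemma modCont_nonneg {d : ℕ} {f : (Fin d → ℝ) → ℝ} (hf : ContinuousOn f (cube d))
    {r : ℝ} (hr : 0 ≤ r) : 0 ≤ modCont d f r := by
  have h0 : (0:ℝ) ∈ {y | ∃ x₁ ∈ cube d, ∃ x₂ ∈ cube d, eucDist x₁ x₂ ≤ r ∧ y = |f x₁ - f x₂|} := by
    refine ⟨0, zero_mem_cube d, 0, zero_mem_cube d, ?_, by simp⟩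
    rw [eucDist_self]; exact hr
  exact le_csSup (modCont_bdd hf r) h0

lemma modCont_le {d : ℕ} {f : (Fin d → ℝ) → ℝ} {r C : ℝ} (hC : 0 ≤ C)
    (h : ∀ x₁ ∈ cube d, ∀ x₂ ∈ cube d, eucDist x₁ x₂ ≤ r → |f x₁ - f x₂| ≤ C) :
    modCont d f r ≤ C := by
  apply Real.sSup_le _ hC
  rintro y ⟨x₁, hx₁, x₂, hx₂, hdist, rfl⟩
  exact h x₁ hx₁ x₂ hx₂ hdist

/-- If `ℳ` is `L_ℳ`-Lipschitz in `L∞` (Assumption 1), its outputs are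
`L_𝒴`-Lipschitz on the cube (Assumption 2), and `V : C([-1,1]^d) → Π_m` is a linear
operator with `‖h − Vh‖_{L∞} ≤ (5d/4) ω_h(2/m)` for all continuous `h`, then
`‖ℳ(f) − V(ℳ(V(f)))‖_{L∞} ≤ 6 L_ℳ d² ω_f(2/m) + 5 L_𝒴 d / (2m)`. -/
theorem discretization_error (d m : ℕ) (hd : 0 < d) (hm : 0 < m)
    (LM LY : ℝ) (hLM : 0 ≤ LM) (hLY : 0 ≤ LY)
    (M : ((Fin d → ℝ) → ℝ) → ((Fin d → ℝ) → ℝ))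
    (hMcont : ∀ f, ContinuousOn f (cube d) → ContinuousOn (M f) (cube d))
    (hMlip : ∀ f₁ f₂, ContinuousOn f₁ (cube d) → ContinuousOn f₂ (cube d) →
      supNorm d (fun x => M f₁ x - M f₂ x) ≤ LM * supNorm d (fun x => f₁ x - f₂ x))
    (hMout : ∀ f, ContinuousOn f (cube d) →
      ∀ x₁ ∈ cube d, ∀ x₂ ∈ cube d, |M f x₁ - M f x₂| ≤ LY * eucDist x₁ x₂)
    (V : ((Fin d → ℝ) → ℝ) → ((Fin d → ℝ) → ℝ))
    (hVadd : ∀ f g, ContinuousOn f (cube d) → ContinuousOn g (cube d) →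
      ∀ x, V (fun y => f y + g y) x = V f x + V g x)
    (hVsmul : ∀ (c : ℝ) f, ContinuousOn f (cube d) →
      ∀ x, V (fun y => c * f y) x = c * V f x)
    (hVpoly : ∀ h, ContinuousOn h (cube d) → IsPolyDeg d m (V h))
    (hVerr : ∀ h, ContinuousOn h (cube d) →
      supNorm d (fun x => h x - V h x) ≤ (5 * (d : ℝ) / 4) * modCont d h (2 / (m : ℝ)))
    (f : (Fin d → ℝ) → ℝ) (hf : ContinuousOn f (cube d)) :
    supNorm d (fun x => M f x - V (M (V f)) x) ≤
      6 * LM * (d : ℝ) ^ 2 * modCont d f (2 / (m : ℝ)) + 5 * LY * (d : ℝ) / (2 * m) := by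
  -- V f is continuous (it's a polynomial)
  obtain ⟨p, _, hp⟩ := hVpoly f hf
  have hVf : ContinuousOn (V f) (cube d) := by
    have : Continuous (V f) := by
      have : V f = fun x => MvPolynomial.eval x p := funext hp
      rw [this]
      exact MvPolynomial.continuous_eval p
    exact this.continuousOn
  have hMVf : ContinuousOn (M (V f)) (cube d) := hMcont _ hVf
  have hMf : ContinuousOn (M f) (cube d) := hMcont _ hf
  obtain ⟨q, _, hq⟩ := hVpoly _ hMVf
  have hVMVf : ContinuousOn (V (M (V f))) (cube d) := by
    have : Continuous (V (M (V f))) := by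
      have : V (M (V f)) = fun x => MvPolynomial.eval x q := funext hq
      rw [this]
      exact MvPolynomial.continuous_eval q
    exact this.continuousOn
  have hr : (0:ℝ) ≤ 2 / (m:ℝ) := by positivity
  have hω : 0 ≤ modCont d f (2 / (m:ℝ)) := modCont_nonneg hf hr
  set A := supNorm d (fun x => M f x - M (V f) x) with hA
  set B := supNorm d (fun x => M (V f) x - V (M (V f)) x) with hB
  have hcontA : ContinuousOn (fun x => M f x - M (V f) x) (cube d) := hMf.sub hMVf
  have hcontB : ContinuousOn (fun x => M (V f) x - V (M (V f)) x) (cube d) := hMVf.sub hVMVf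
  have hAnn : 0 ≤ A := le_trans (abs_nonneg _) (le_supNorm hcontA (zero_mem_cube d))
  have hBnn : 0 ≤ B := le_trans (abs_nonneg _) (le_supNorm hcontB (zero_mem_cube d))
  have htri : supNorm d (fun x => M f x - V (M (V f)) x) ≤ A + B := by
    apply supNorm_le (by linarith)
    intro x hx
    calc |M f x - V (M (V f)) x|
        = |(M f x - M (V f) x) + (M (V f) x - V (M (V f)) x)| := by ring_nf
      _ ≤ |M f x - M (V f) x| + |M (V f) x - V (M (V f)) x| := abs_add_le _ _
      _ ≤ A + B := add_le_add (le_supNorm hcontA hx) (le_supNorm hcontB hx)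
  -- Bound A
  have hA1 : A ≤ LM * ((5 * (d:ℝ) / 4) * modCont d f (2 / (m:ℝ))) := by
    calc A ≤ LM * supNorm d (fun x => f x - V f x) := hMlip f (V f) hf hVf
      _ ≤ LM * ((5 * (d:ℝ) / 4) * modCont d f (2 / (m:ℝ))) :=
        mul_le_mul_of_nonneg_left (hVerr f hf) hLM
  have hA2 : LM * ((5 * (d:ℝ) / 4) * modCont d f (2 / (m:ℝ)))
      ≤ 6 * LM * (d:ℝ) ^ 2 * modCont d f (2 / (m:ℝ)) := by
    have hd1 : (1:ℝ) ≤ (d:ℝ) := by exact_mod_cast hd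
    nlinarith [mul_nonneg hLM hω]
  -- Bound B
  have hB1 : B ≤ (5 * (d:ℝ) / 4) * modCont d (M (V f)) (2 / (m:ℝ)) := hVerr _ hMVf
  have hB2 : modCont d (M (V f)) (2 / (m:ℝ)) ≤ LY * (2 / (m:ℝ)) := by
    apply modCont_le (by positivity)
    intro x₁ hx₁ x₂ hx₂ hdist
    calc |M (V f) x₁ - M (V f) x₂| ≤ LY * eucDist x₁ x₂ := hMout _ hVf x₁ hx₁ x₂ hx₂
      _ ≤ LY * (2 / (m:ℝ)) := mul_le_mul_of_nonneg_left hdist hLY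
  have hB3 : B ≤ 5 * LY * (d:ℝ) / (2 * m) := by
    have hm0 : (0:ℝ) < (m:ℝ) := by exact_mod_cast hm
    calc B ≤ (5 * (d:ℝ) / 4) * (LY * (2 / (m:ℝ))) := by
          refine le_trans hB1 (mul_le_mul_of_nonneg_left hB2 (by positivity))
      _ = 5 * LY * (d:ℝ) / (2 * m) := by field_simp; ring
  linarith
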